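/- arXiv:2209.06691 — 4 statements merged into one kernel-verified Lean document; each statement's English description precedes it below -/
import Mathlib

section
/- Let X₁, …, X_M be finite sets and for each i let T_i, T'_i ⊆ X_i be nonempty with |T_i| = |T'_i|. Let μ be the product of uniform distributions on T_i and ν the product of uniform distributions on T'_i, both on X = X₁ × ⋯ × X_M. Then for any λ ≥ 0, writing ρ = ∏_{i : T_i ≠ T'_i} (|T_i ∩ T'_i|/|T'_i|), one has ∑_{x∈X} max(ν(x) − λ·μ(x), 0) = (1 − ρ) + ρ·max(1 − λ·∏_{i : T_i ≠ T'_i}(|T'_i|/|T_i|), 0). -/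
/-- product version of the positive-part identity for product uniform
distributions, with ρ = ∏_{i : T_i ≠ T'_i} |T_i ∩ T'_i|/|T'_i|. -/
theorem stmt_5 {M : ℕ} (X : Fin M → Type*) [∀ i, Fintype (X i)] [∀ i, DecidableEq (X i)]
    (T T' : ∀ i, Finset (X i)) (hT : ∀ i, (T i).Nonempty) (hT' : ∀ i, (T' i).Nonempty)
    (hcard : ∀ i, (T i).card = (T' i).card) (lam : ℝ) (hlam : 0 ≤ lam) :
    ∑ x : (∀ i, X i),
        max ((∏ i, if x i ∈ T' i then (1 : ℝ) / (T' i).card else 0)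
             - lam * ∏ i, if x i ∈ T i then (1 : ℝ) / (T i).card else 0) 0
      = (1 - ∏ i ∈ Finset.univ.filter (fun i => T i ≠ T' i),
              ((T i ∩ T' i).card : ℝ) / (T' i).card)
        + (∏ i ∈ Finset.univ.filter (fun i => T i ≠ T' i),
              ((T i ∩ T' i).card : ℝ) / (T' i).card)
          * max (1 - lam * ∏ i ∈ Finset.univ.filter (fun i => T i ≠ T' i),
              ((T' i).card : ℝ) / (T i).card) 0 := by
  classical
  set c : ℝ := ∏ i, (1 : ℝ) / (T' i).card with hc_def
  have hc'pos : ∀ i : Fin M, (0:ℝ) < (T' i).card := fun i => by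
    exact_mod_cast Finset.card_pos.mpr (hT' i)
  have hcpos : ∀ i : Fin M, (0:ℝ) < (T i).card := fun i => by
    exact_mod_cast Finset.card_pos.mpr (hT i)
  have hcpos' : 0 < c := Finset.prod_pos fun i _ => by
    have := hc'pos i; positivity
  have hμν : (∏ i, (1 : ℝ) / (T i).card) = c := by
    exact Finset.prod_congr rfl fun i _ => by rw [hcard i]
  set A : Finset (∀ i, X i) := Fintype.piFinset T' with hA
  set B : Finset (∀ i, X i) := Fintype.piFinset T with hB
  have hν : ∀ x : (∀ i, X i), (∏ i, if x i ∈ T' i then (1 : ℝ) / (T' i).card else 0)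
      = if x ∈ A then c else 0 := by
    intro x
    by_cases h : x ∈ A
    · rw [if_pos h]
      exact Finset.prod_congr rfl fun i _ => if_pos ((Fintype.mem_piFinset).1 h i)
    · rw [if_neg h]
      rw [hA, Fintype.mem_piFinset] at h
      push_neg at h
      obtain ⟨i, hi⟩ := h
      exact Finset.prod_eq_zero (Finset.mem_univ i) (if_neg hi)
  have hμ : ∀ x : (∀ i, X i), (∏ i, if x i ∈ T i then (1 : ℝ) / (T i).card else 0)
      = if x ∈ B then c else 0 := by
    intro x
    by_cases h : x ∈ B
    · rw [if_pos h, ← hμν]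
      exact Finset.prod_congr rfl fun i _ => if_pos ((Fintype.mem_piFinset).1 h i)
    · rw [if_neg h]
      rw [hB, Fintype.mem_piFinset] at h
      push_neg at h
      obtain ⟨i, hi⟩ := h
      exact Finset.prod_eq_zero (Finset.mem_univ i) (if_neg hi)
  -- rewrite LHS as a sum over A
  have hLHS : ∑ x : (∀ i, X i),
        max ((∏ i, if x i ∈ T' i then (1 : ℝ) / (T' i).card else 0)
             - lam * ∏ i, if x i ∈ T i then (1 : ℝ) / (T i).card else 0) 0
      = ∑ x ∈ A, max (c - lam * (if x ∈ B then c else 0)) 0 := by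
    rw [← Finset.sum_subset (Finset.subset_univ A)]
    · exact Finset.sum_congr rfl fun x hx => by rw [hν, hμ, if_pos hx]
    · intro x _ hx
      rw [hν, hμ, if_neg hx, zero_sub]
      apply max_eq_right
      simp only [neg_nonpos]
      positivity
  rw [hLHS]
  -- split the sum over A according to membership in B
  rw [← Finset.sum_filter_add_sum_filter_not A (fun x => x ∈ B)]
  have h1 : ∑ x ∈ A.filter (fun x => x ∈ B), max (c - lam * (if x ∈ B then c else 0)) 0
      = (A.filter (fun x => x ∈ B)).card * (c * max (1 - lam) 0) := by
    rw [Finset.sum_congr rfl (fun x hx => ?_), Finset.sum_const, nsmul_eq_mul]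
    rw [if_pos (Finset.mem_filter.1 hx).2]
    rw [mul_max_of_nonneg _ _ hcpos'.le, mul_zero, mul_sub, mul_one, mul_comm lam c]
  have h2 : ∑ x ∈ A.filter (fun x => ¬ x ∈ B), max (c - lam * (if x ∈ B then c else 0)) 0
      = (A.filter (fun x => ¬ x ∈ B)).card * c := by
    rw [Finset.sum_congr rfl (fun x hx => ?_), Finset.sum_const, nsmul_eq_mul]
    rw [if_neg (Finset.mem_filter.1 hx).2, mul_zero, sub_zero, max_eq_left hcpos'.le]
  rw [h1, h2]
  -- identify the filter as a piFinset
  have hAB : A.filter (fun x => x ∈ B) = Fintype.piFinset (fun i => T i ∩ T' i) := by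
    ext x
    simp only [Finset.mem_filter, hA, hB, Fintype.mem_piFinset, Finset.mem_inter,
      forall_and]
    tauto
  have hcardAB : ((A.filter (fun x => x ∈ B)).card : ℝ)
      = ∏ i, ((T i ∩ T' i).card : ℝ) := by
    rw [hAB, Fintype.card_piFinset]
    push_cast
    ring
  have hcardA : ((A.card : ℝ)) = ∏ i, ((T' i).card : ℝ) := by
    rw [hA, Fintype.card_piFinset]; push_cast; ring
  have hcardnot : ((A.filter (fun x => ¬ x ∈ B)).card : ℝ)
      = (∏ i, ((T' i).card : ℝ)) - ∏ i, ((T i ∩ T' i).card : ℝ) := by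
    have := Finset.card_filter_add_card_filter_not (s := A) (p := fun x => x ∈ B)
    have h := congrArg (Nat.cast (R := ℝ)) this
    push_cast at h
    rw [hcardAB] at h
    rw [← hcardA]
    linarith
  rw [hcardAB, hcardnot]
  -- RHS simplifications
  have hone : (∏ i ∈ Finset.univ.filter (fun i => T i ≠ T' i),
      ((T' i).card : ℝ) / (T i).card) = 1 := by
    apply Finset.prod_eq_one
    intro i _
    rw [hcard i, div_self (hc'pos i).ne']
  have hrho : (∏ i ∈ Finset.univ.filter (fun i => T i ≠ T' i),
      ((T i ∩ T' i).card : ℝ) / (T' i).card)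
      = (∏ i, ((T i ∩ T' i).card : ℝ)) * c := by
    rw [Finset.prod_filter]
    rw [show (∏ i, if T i ≠ T' i then ((T i ∩ T' i).card : ℝ) / (T' i).card else 1)
        = ∏ i, ((T i ∩ T' i).card : ℝ) / (T' i).card from
      Finset.prod_congr rfl fun i _ => by
        by_cases h : T i ≠ T' i
        · rw [if_pos h]
        · rw [if_neg h]
          push_neg at h
          rw [h, Finset.inter_self, div_self (hc'pos i).ne']]
    rw [hc_def, ← Finset.prod_mul_distrib]
    exact Finset.prod_congr rfl fun i _ => by rw [div_eq_mul_one_div]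
  have hAc : (∏ i, ((T' i).card : ℝ)) * c = 1 := by
    rw [hc_def, ← Finset.prod_mul_distrib]
    apply Finset.prod_eq_one
    intro i _
    rw [mul_one_div, div_self (hc'pos i).ne']
  rw [hone, hrho, mul_one]
  ring_nf
  nlinarith [hAc, le_max_right (1 - lam) (0:ℝ)]
end

section
/- Let X₁, …, X_M be finite sets, and for each i let T_i, T'_i ⊆ X_i be nonempty with |T_i| = |T'_i|. Let μ = ∏ᵢ Unif(T_i) and ν = ∏ᵢ Unif(T'_i) on the product space. Then for any f : ∏ᵢ X_i → [0,1], E_ν[f] ≤ min(E_μ[f] + 1 − ∏_{i=1}^{M} (|T_i ∩ T'_i|/|T_i|), 1). -/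
/-- multi-coordinate certified upper bound. For product uniform
distributions μ = ∏ Unif(T_i), ν = ∏ Unif(T'_i) with |T_i| = |T'_i| and
f : ∏ X_i → [0,1], E_ν[f] ≤ min(E_μ[f] + 1 − ∏ |T_i ∩ T'_i|/|T_i|, 1). -/
theorem stmt_7 {M : ℕ} (X : Fin M → Type*) [∀ i, Fintype (X i)] [∀ i, DecidableEq (X i)]
    (T T' : ∀ i, Finset (X i)) (hT : ∀ i, (T i).Nonempty) (hT' : ∀ i, (T' i).Nonempty)
    (hcard : ∀ i, (T i).card = (T' i).card)
    (f : (∀ i, X i) → ℝ) (hf : ∀ x, 0 ≤ f x ∧ f x ≤ 1) :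
    ∑ x : (∀ i, X i), f x * ∏ i, (if x i ∈ T' i then (1 : ℝ) / (T' i).card else 0)
      ≤ min ((∑ x : (∀ i, X i), f x * ∏ i, (if x i ∈ T i then (1 : ℝ) / (T i).card else 0))
              + 1 - ∏ i, ((T i ∩ T' i).card : ℝ) / (T i).card) 1 := by
  set g : ∀ i, X i → ℝ := fun i a => if a ∈ T i then (1:ℝ)/(T i).card else 0 with hg
  set h : ∀ i, X i → ℝ := fun i a => if a ∈ T' i then (1:ℝ)/(T' i).card else 0 with hh
  set m : ∀ i, X i → ℝ := fun i a => if a ∈ T i ∩ T' i then (1:ℝ)/(T i).card else 0 with hm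
  have hTc : ∀ i, (0:ℝ) < (T i).card := fun i => by
    exact_mod_cast Finset.card_pos.2 (hT i)
  have hg0 : ∀ i a, 0 ≤ g i a := fun i a => by
    simp only [hg]; positivity
  have hh0 : ∀ i a, 0 ≤ h i a := fun i a => by
    simp only [hh]; positivity
  -- m = min g h
  have hmin : ∀ i a, m i a = min (g i a) (h i a) := by
    intro i a
    simp only [hg, hh, hm, Finset.mem_inter]
    have hc : ((T' i).card : ℝ) = (T i).card := by exact_mod_cast (hcard i).symm
    by_cases h1 : a ∈ T i <;> by_cases h2 : a ∈ T' i <;>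
      simp [h1, h2, hc]
  -- sums of per-coordinate masses
  have sum_ite : ∀ (i : Fin M) (S : Finset (X i)) (c : ℝ),
      ∑ a : X i, (if a ∈ S then c else 0) = S.card * c := by
    intro i S c
    rw [Finset.sum_ite_mem, Finset.univ_inter, Finset.sum_const, nsmul_eq_mul]
  have sum_g : ∀ i, ∑ a : X i, g i a = 1 := by
    intro i
    rw [hg]; rw [sum_ite i (T i) _]
    field_simp
  have sum_h : ∀ i, ∑ a : X i, h i a = 1 := by
    intro i
    have hc : (0:ℝ) < (T' i).card := by exact_mod_cast Finset.card_pos.2 (hT' i)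
    rw [hh]; rw [sum_ite i (T' i) _]
    field_simp
  have sum_m : ∀ i, ∑ a : X i, m i a = ((T i ∩ T' i).card : ℝ) / (T i).card := by
    intro i
    rw [hm]; rw [sum_ite i (T i ∩ T' i) _]
    ring
  -- total masses
  have swap : ∀ (F : ∀ i, X i → ℝ),
      ∑ x : (∀ i, X i), ∏ i, F i (x i) = ∏ i, ∑ a : X i, F i a := by
    intro F
    rw [show (Finset.univ : Finset (∀ i, X i)) = Fintype.piFinset (fun i => Finset.univ) by
      simp]
    rw [← Finset.prod_univ_sum]
  have tot_h : ∑ x : (∀ i, X i), ∏ i, h i (x i) = 1 := by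
    rw [swap h]; simp [sum_h]
  have tot_m : ∑ x : (∀ i, X i), ∏ i, m i (x i)
      = ∏ i, ((T i ∩ T' i).card : ℝ) / (T i).card := by
    rw [swap m]; simp [sum_m]
  -- pointwise: ∏ m ≤ min (∏ g) (∏ h)
  have prodmin : ∀ x : (∀ i, X i),
      ∏ i, m i (x i) ≤ min (∏ i, g i (x i)) (∏ i, h i (x i)) := by
    intro x
    refine le_min ?_ ?_
    · exact Finset.prod_le_prod (fun i _ => by rw [hmin]; positivity)
        (fun i _ => by rw [hmin i (x i)]; exact min_le_left _ _)
    · exact Finset.prod_le_prod (fun i _ => by rw [hmin]; positivity)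
        (fun i _ => by rw [hmin i (x i)]; exact min_le_right _ _)
  refine le_min ?_ ?_
  · -- main bound
    have key : ∀ x : (∀ i, X i),
        f x * ∏ i, h i (x i) - f x * ∏ i, g i (x i)
          ≤ ∏ i, h i (x i) - ∏ i, m i (x i) := by
      intro x
      obtain ⟨hf0, hf1⟩ := hf x
      have hG : (0:ℝ) ≤ ∏ i, g i (x i) := Finset.prod_nonneg fun i _ => hg0 i (x i)
      have hH : (0:ℝ) ≤ ∏ i, h i (x i) := Finset.prod_nonneg fun i _ => hh0 i (x i)
      have := prodmin x
      rcases le_total (∏ i, h i (x i)) (∏ i, g i (x i)) with hle | hle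
      · have : ∏ i, m i (x i) ≤ ∏ i, h i (x i) := le_trans this (min_le_right _ _)
        nlinarith
      · have : ∏ i, m i (x i) ≤ ∏ i, g i (x i) := le_trans this (min_le_left _ _)
        nlinarith
    have := Finset.sum_le_sum (fun x (_ : x ∈ Finset.univ) => key x)
    rw [Finset.sum_sub_distrib, Finset.sum_sub_distrib, tot_h, tot_m] at this
    linarith
  · -- ≤ 1 bound
    calc ∑ x : (∀ i, X i), f x * ∏ i, h i (x i)
        ≤ ∑ x : (∀ i, X i), ∏ i, h i (x i) := by
          refine Finset.sum_le_sum fun x _ => ?_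
          have hH : (0:ℝ) ≤ ∏ i, h i (x i) := Finset.prod_nonneg fun i _ => hh0 i (x i)
          nlinarith [(hf x).1, (hf x).2]
      _ = 1 := tot_h
end

section
/- Tightness of the certified upper bound (Case p + o ≤ 1): Let X be a finite set, T, T' ⊆ X nonempty with |T| = |T'|, let o = 1 − |T ∩ T'|/|T|, and let p ∈ [0,1] satisfy p ≤ 1 − o and p·|T| ∈ ℕ. Then there exists f : X → {0,1} such that E_{Unif(T)}[f] = p and E_{Unif(T')}[f] = p + o. Thus the bound E_ν[f] ≤ min(E_μ[f] + o, 1) is attained. -/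
/-- tightness, case p + o ≤ 1. With o = 1 − |T∩T'|/|T|, p ≤ 1 − o and
p·|T| ∈ ℕ, there is a {0,1}-valued f with E_{Unif(T)}[f] = p and E_{Unif(T')}[f] = p + o. -/
theorem stmt_8 {X : Type*} [Fintype X] [DecidableEq X]
    (T T' : Finset X) (hT : T.Nonempty) (hT' : T'.Nonempty)
    (hcard : T.card = T'.card) (p : ℝ) (hp0 : 0 ≤ p) (hp1 : p ≤ 1)
    (hple : p ≤ 1 - (1 - (T ∩ T').card / T.card))
    (hnat : ∃ m : ℕ, p * T.card = m) :
    ∃ f : X → ℝ, (∀ x, f x = 0 ∨ f x = 1) ∧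
      (∑ x ∈ T, f x / T.card = p) ∧
      (∑ x ∈ T', f x / T'.card = p + (1 - (T ∩ T').card / T.card)) := by
  obtain ⟨m, hm⟩ := hnat
  have hTpos : (0:ℝ) < T.card := by exact_mod_cast hT.card_pos
  have hmle : m ≤ (T ∩ T').card := by
    have h1 : (m:ℝ) ≤ (T ∩ T').card := by
      rw [← hm]
      calc p * T.card ≤ ((T ∩ T').card / T.card) * T.card := by
            apply mul_le_mul_of_nonneg_right _ hTpos.le; linarith
        _ = (T ∩ T').card := div_mul_cancel₀ _ hTpos.ne'
    exact_mod_cast h1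
  obtain ⟨U, hUsub, hUcard⟩ := Finset.exists_subset_card_eq hmle
  have hUT : U ⊆ T := hUsub.trans Finset.inter_subset_left
  have hUT' : U ⊆ T' := hUsub.trans Finset.inter_subset_right
  set S := U ∪ (T' \ T) with hS
  refine ⟨fun x => if x ∈ S then 1 else 0, fun x => by by_cases h : x ∈ S <;> simp [h], ?_, ?_⟩
  · rw [← Finset.sum_div, Finset.sum_ite_mem, Finset.sum_const, nsmul_eq_mul, mul_one]
    have hTS : T ∩ S = U := by
      ext x
      simp only [hS, Finset.mem_inter, Finset.mem_union, Finset.mem_sdiff]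
      constructor
      · rintro ⟨hxT, hxU | ⟨_, hxnT⟩⟩
        · exact hxU
        · exact absurd hxT hxnT
      · intro hxU; exact ⟨hUT hxU, Or.inl hxU⟩
    rw [hTS, hUcard, eq_comm, eq_div_iff hTpos.ne', mul_comm]
    linarith [hm]
  · rw [← Finset.sum_div, Finset.sum_ite_mem, Finset.sum_const, nsmul_eq_mul, mul_one]
    have hT'S : T' ∩ S = S := by
      apply Finset.inter_eq_right.mpr
      exact Finset.union_subset hUT' (Finset.sdiff_subset)
    have hdisj : Disjoint U (T' \ T) := by
      apply Finset.disjoint_left.mpr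
      intro x hxU hxS
      exact (Finset.mem_sdiff.mp hxS).2 (hUT hxU)
    have hScard : S.card = m + (T' \ T).card := by
      rw [hS, Finset.card_union_of_disjoint hdisj, hUcard]
    have h2 : (T' \ T).card + (T' ∩ T).card = T'.card :=
      Finset.card_sdiff_add_card_inter T' T
    have h3 : (T' ∩ T).card = (T ∩ T').card := by rw [Finset.inter_comm]
    rw [hT'S, hScard]
    have hcR : (T.card : ℝ) = T'.card := by exact_mod_cast hcard
    have hpm : p = m / T.card := by field_simp; linarith [hm]
    have h2R : ((T' \ T).card : ℝ) + ((T ∩ T').card : ℝ) = T'.card := by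
      rw [← h3]; exact_mod_cast h2
    push_cast
    rw [hpm]
    field_simp
    ring_nf
    nlinarith [h2R, hcR]
end

section
/- Tightness of the certified upper bound (Case p + o > 1): Let X be a finite set, T, T' ⊆ X nonempty with |T| = |T'|, let o = 1 − |T ∩ T'|/|T|, and let p ∈ [0,1] satisfy p > 1 − o and p·|T| ∈ ℕ. Then there exists f : X → {0,1} such that E_{Unif(T)}[f] = p and E_{Unif(T')}[f] = 1. -/
/-!
Pick `U` with `T ∩ T' ⊆ U ⊆ T` and `|U| = p·|T|`; this is possible because `p > 1 − o` means
`|T ∩ T'| < p·|T|`. The indicator of `U ∪ T'` then has mean `|U|/|T| = p` on `T`, since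
`T ∩ (U ∪ T') = U`, and is identically `1` on `T'`.
-/

namespace Finset

variable {X : Type*} [DecidableEq X]

theorem sum_boole_mem_div_card (T S : Finset X) :
    ∑ x ∈ T, (if x ∈ S then 1 else 0 : ℝ) / T.card = ((T ∩ S).card : ℝ) / T.card := by
  rw [← sum_div, sum_boole, filter_mem_eq_inter]

theorem inter_union_eq_of_inter_subset {T T' U : Finset X} (hTU : T ∩ T' ⊆ U) (hUT : U ⊆ T) :
    T ∩ (U ∪ T') = U := by
  rw [inter_union_distrib_left, inter_eq_right.mpr hUT, union_eq_left.mpr hTU]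

end Finset

open Finset in
theorem stmt_9_general {X : Type*} [DecidableEq X]
    (T T' : Finset X) (hT : T.Nonempty)
    (hcard : T.card = T'.card) (p : ℝ) (hp1 : p ≤ 1)
    (hpgt : 1 - (1 - (T ∩ T').card / T.card) < p)
    (hnat : ∃ m : ℕ, p * T.card = m) :
    ∃ f : X → ℝ, (∀ x, f x = 0 ∨ f x = 1) ∧
      (∑ x ∈ T, f x / T.card = p) ∧
      (∑ x ∈ T', f x / T'.card = 1) := by
  obtain ⟨m, hm⟩ := hnat
  have hTpos : (0 : ℝ) < T.card := by exact_mod_cast card_pos.mpr hT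
  have hinter_lt : ((T ∩ T').card : ℝ) < m := by
    rw [← hm, ← div_lt_iff₀ hTpos]
    linarith
  have hm_le : (m : ℝ) ≤ T.card := by nlinarith
  obtain ⟨U, hTU, hUT, hU⟩ :=
    exists_subsuperset_card_eq inter_subset_left (by exact_mod_cast hinter_lt.le)
      (by exact_mod_cast hm_le)
  refine ⟨fun x => if x ∈ U ∪ T' then 1 else 0, fun x => by dsimp only; split_ifs <;> simp, ?_, ?_⟩
  · rw [sum_boole_mem_div_card, inter_union_eq_of_inter_subset hTU hUT, hU, ← hm]
    field_simp
  · rw [sum_boole_mem_div_card, inter_eq_left.mpr subset_union_right, ← hcard]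
    exact div_self hTpos.ne'

/-- tightness, case p + o > 1. With o = 1 − |T∩T'|/|T|, p > 1 − o and
p·|T| ∈ ℕ, there is a {0,1}-valued f with E_{Unif(T)}[f] = p and E_{Unif(T')}[f] = 1. -/
theorem stmt_9 {X : Type*} [Fintype X] [DecidableEq X]
    (T T' : Finset X) (hT : T.Nonempty) (hT' : T'.Nonempty)
    (hcard : T.card = T'.card) (p : ℝ) (hp0 : 0 ≤ p) (hp1 : p ≤ 1)
    (hpgt : 1 - (1 - (T ∩ T').card / T.card) < p)
    (hnat : ∃ m : ℕ, p * T.card = m) :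
    ∃ f : X → ℝ, (∀ x, f x = 0 ∨ f x = 1) ∧
      (∑ x ∈ T, f x / T.card = p) ∧
      (∑ x ∈ T', f x / T'.card = 1) :=
  stmt_9_general T T' hT hcard p hp1 hpgt hnat
end
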